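/- arXiv:1712.01107 — 3 statements merged into one kernel-verified Lean document; each statement's English description precedes it below -/
import Mathlib

section
/- Fix integers m and n with n ≠ 0, and define s(m) = (-(n+2m)^2 + n) / (2^5·7·n) as a rational number. Then the function k ↦ s(m + 56nk) on natural numbers takes infinitely many distinct values; in particular there is a strictly injective subsequence of values. -/
/-! Along the progression `x = m + 56nk` the invariant `s(x)` is, up to an affine change of
scale, minus the square of `(n + 2m) + 112nk`. A square `(b + ak)²` with `a ≠ 0` can take the
same value at two integers `k ≠ k'` only if `a(k + k') = -2b`, which is impossible once both
exceed `|b|`; so the values `s(m + 56nk)` are pairwise distinct for all large `k`. -/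

lemma Int.injOn_sq_add_mul_Ioi_abs {a : ℤ} (b : ℤ) (ha : a ≠ 0) :
    Set.InjOn (fun k : ℤ => (b + a * k) ^ 2) (Set.Ioi |b|) := by
  intro k hk k' hk' h
  rcases sq_eq_sq_iff_eq_or_eq_neg.1 h with h | h
  · exact mul_left_cancel₀ ha (by linarith)
  · have hsum : a * (k + k') = -(2 * b) := by linarith
    have hk : |b| < k := hk
    have hk' : |b| < k' := hk'
    have : |2 * b| < |a * (k + k')| := by
      rw [abs_mul, abs_mul, abs_two, abs_of_pos (by linarith [abs_nonneg b] : (0 : ℤ) < k + k')]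
      nlinarith [Int.one_le_abs ha, abs_nonneg b]
    rw [hsum, abs_neg] at this
    exact absurd this (lt_irrefl _)

/-- For fixed `m, n` with `n ≠ 0` and `s(x) = (-(n+2x)^2 + n)/(2^5·7·n)`, the
function `k ↦ s(m + 56nk)` takes infinitely many distinct values, and there is
a strictly monotone subsequence along which the values are pairwise distinct. -/
theorem stmt6 (m n : ℤ) (hn : n ≠ 0) (s : ℤ → ℚ)
    (hs : ∀ x : ℤ, s x = ((-(n + 2 * x) ^ 2 + n : ℤ) : ℚ) / ((2 ^ 5 * 7 * n : ℤ) : ℚ)) :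
    (Set.range fun k : ℕ => s (m + 56 * n * k)).Infinite ∧
      ∃ φ : ℕ → ℕ, StrictMono φ ∧
        Function.Injective fun k : ℕ => s (m + 56 * n * (φ k)) := by
  have hs_eq : ∀ x y : ℤ, s x = s y → (n + 2 * x) ^ 2 = (n + 2 * y) ^ 2 := by
    intro x y h
    have hd : ((2 ^ 5 * 7 * n : ℤ) : ℚ) ≠ 0 := by exact_mod_cast mul_ne_zero (by norm_num) hn
    rw [hs, hs, div_left_inj' hd, Int.cast_inj] at h
    linarith
  set N := |n + 2 * m|.toNat + 1
  have hinj : Function.Injective fun k : ℕ => s (m + 56 * n * ((k + N : ℕ) : ℤ)) := by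
    intro k k' h
    have hN : ∀ j : ℕ, ((j + N : ℕ) : ℤ) ∈ Set.Ioi |n + 2 * m| := fun j => by
      simp only [Set.mem_Ioi, N]; push_cast; omega
    have := Int.injOn_sq_add_mul_Ioi_abs (n + 2 * m) (mul_ne_zero (by norm_num : (112 : ℤ) ≠ 0) hn)
      (hN k) (hN k') (by convert hs_eq _ _ h using 2 <;> ring)
    exact Nat.add_right_cancel (Int.ofNat_inj.1 this)
  refine ⟨(Set.infinite_range_of_injective hinj).mono ?_, fun k => k + N,
    fun i j hij => Nat.add_lt_add_right hij N, hinj⟩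
  rintro _ ⟨k, rfl⟩
  exact ⟨k + N, rfl⟩
end

section
/- Fix integers a, b with a ≠ b, set λ = 2^3·3·7·|a-b|, and define s(a,b) = -(a+b+2)^2 / (2^5·7·(a-b)) + sgn(a-b)/(2^5·7) as a rational number. Then the sequence k ↦ s(a+kλ, b+kλ) takes infinitely many distinct values. -/
/-! Along the sequence the first argument minus the second stays `a - b`, while `x + y + 2` moves
linearly in `k` with nonzero slope `2λ`. Hence `s(a + kλ, b + kλ)` is an injective affine function
of the square of an unbounded integer sequence, and so takes infinitely many values. -/

theorem Int.infinite_range_add_mul_sq {u v : ℤ} (hv : v ≠ 0) :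
    (Set.range fun k : ℕ => (u + k * v) ^ 2).Infinite := by
  refine Set.infinite_of_not_bddAbove ?_
  rintro ⟨M, hM⟩
  set k : ℕ := (|u| + |M|).toNat + 1
  have hk : |u| + |M| < k := by omega
  have hkv : (k : ℤ) ≤ |k * v| := by
    rw [abs_mul, Nat.abs_cast]
    exact le_mul_of_one_le_right k.cast_nonneg (Int.one_le_abs hv)
  have hlarge : |M| < |u + k * v| := by
    have htri := abs_sub_abs_le_abs_sub (k * v) (-u)
    rw [abs_neg, sub_neg_eq_add, add_comm] at htri
    linarith
  have hsq : |u + k * v| ≤ (u + k * v) ^ 2 := by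
    simpa only [Int.natCast_natAbs] using Int.natAbs_le_self_sq (u + k * v)
  linarith [hM ⟨k, rfl⟩, le_abs_self M]

/-- For fixed `a ≠ b`, `λ = 2^3·3·7·|a-b|` and
`s(a,b) = -(a+b+2)^2/(2^5·7·(a-b)) + sgn(a-b)/(2^5·7)`, the sequence
`k ↦ s(a+kλ, b+kλ)` takes infinitely many distinct values. -/
theorem stmt7 (a b lam : ℤ) (hab : a ≠ b) (hlam : lam = 2 ^ 3 * 3 * 7 * |a - b|)
    (s : ℤ → ℤ → ℚ)
    (hs : ∀ x y : ℤ, x ≠ y →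
      s x y = -(((x + y + 2) ^ 2 : ℤ) : ℚ) / ((2 ^ 5 * 7 * (x - y) : ℤ) : ℚ) +
        (((x - y).sign : ℤ) : ℚ) / (2 ^ 5 * 7)) :
    (Set.range fun k : ℕ => s (a + k * lam) (b + k * lam)).Infinite := by
  have hsub : a - b ≠ 0 := sub_ne_zero.mpr hab
  have hlam0 : 2 * lam ≠ 0 := by rw [hlam]; positivity
  set D : ℚ := ((2 ^ 5 * 7 * (a - b) : ℤ) : ℚ)
  have hD : D ≠ 0 := by simp [D, sub_eq_zero, hab]
  have hseq : (fun k : ℕ => s (a + k * lam) (b + k * lam)) =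
      (fun t : ℤ => -(t : ℚ) / D + (((a - b).sign : ℤ) : ℚ) / (2 ^ 5 * 7)) ∘
        fun k : ℕ => (a + b + 2 + k * (2 * lam)) ^ 2 := by
    funext k
    have hne : a + k * lam ≠ b + k * lam := by simpa using hab
    rw [hs _ _ hne, Function.comp_apply]
    congr 4 <;> ring
  rw [hseq, Set.range_comp]
  refine (Int.infinite_range_add_mul_sq hlam0).image fun t _ t' _ h => ?_
  simpa [hD] using h
end

section
/- Let a, b, t be integers with t(a+b)^2 ≠ ab. Define s(a,b,t) = (a+b)(1-t)^2/(2^3·7·(t(a+b)^2-ab)) + (-3ab + (1-t)(8+(a+b)^2))/(2^5·3·7) + σ/(2^5·7), where σ = 0 if ab - t(a+b)^2 < 0, σ = 2 if ab - t(a+b)^2 > 0 and a+b > 0, and σ = -2 if ab - t(a+b)^2 > 0 and a+b < 0. With r = t(a+b)^2 - ab, λ = 2^5·3·7·r, a_k = a+(a+b)^2λk, b_k = b-(a+b)^2λk, t_k = t-(a-b)λk-(a+b)^2λ^2k^2, the sequence k ↦ s(a_k,b_k,t_k) takes infinitely many distinct values. -/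
/-!
Along the sequence, `a_k + b_k = a + b` and `t_k (a_k + b_k)^2 - a_k b_k = t (a + b)^2 - a b` stay
fixed, so the `σ`-term and the denominator of `s` are constant and `s(a_k, b_k, t_k)` is a polynomial
in `k`. It has degree `4` when `a + b ≠ 0`, and degree `1` when `a + b = 0` (then `a - b = 2a ≠ 0`,
since the invariant equals `a^2`). A nonconstant polynomial takes each value only finitely often.
-/

open Polynomial

theorem Polynomial.infinite_range_eval_natCast {R : Type*} [CommRing R] [IsDomain R] [CharZero R]
    {P : R[X]} (hP : 0 < P.natDegree) : (Set.range fun k : ℕ => P.eval (k : R)).Infinite := by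
  intro hfin
  have hfiber : ∀ y : R, ((fun k : ℕ => P.eval (k : R)) ⁻¹' {y}).Finite := by
    intro y
    have hne : P - C y ≠ 0 := ne_zero_of_natDegree_gt (n := 0) (by rwa [natDegree_sub_C])
    refine ((finite_setOfPred_isRoot hne).preimage (Nat.cast_injective (R := R)).injOn).subset ?_
    intro k hk
    simpa [sub_eq_zero] using hk
  exact Set.infinite_univ (by simpa using hfin.preimage' fun y _ => hfiber y)

namespace KreckStolz

/-- The closed formula for `s(A, B, T)`, with the `σ`-term `σ / (2^5·7)` given as `c`. -/
def sFormula (A B T : ℤ) (c : ℚ) : ℚ :=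
  ((A + B : ℤ) : ℚ) * ((1 - (T : ℚ)) ^ 2) /
      ((2 ^ 3 * 7 : ℚ) * (((T * (A + B) ^ 2 - A * B : ℤ)) : ℚ)) +
    (-3 * (A : ℚ) * (B : ℚ) + (1 - (T : ℚ)) * (8 + ((A + B : ℤ) : ℚ) ^ 2)) / (2 ^ 5 * 3 * 7) + c

section Sequence

variable (a b t lam k : ℤ)

def seqA : ℤ := a + (a + b) ^ 2 * lam * k

def seqB : ℤ := b - (a + b) ^ 2 * lam * k

def seqT : ℤ := t - (a - b) * lam * k - (a + b) ^ 2 * lam ^ 2 * k ^ 2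

theorem seqA_add_seqB : seqA a b lam k + seqB a b lam k = a + b := by
  unfold seqA seqB; ring

theorem seqT_mul_sub_seqA_mul_seqB :
    seqT a b t lam k * (seqA a b lam k + seqB a b lam k) ^ 2 - seqA a b lam k * seqB a b lam k =
      t * (a + b) ^ 2 - a * b := by
  unfold seqA seqB seqT; ring

end Sequence

theorem sigma_eq_of_add_eq_of_disc_eq {σ : ℤ → ℤ → ℤ → ℚ}
    (hσ1 : ∀ A B T : ℤ, A * B - T * (A + B) ^ 2 < 0 → σ A B T = 0)
    (hσ2 : ∀ A B T : ℤ, 0 < A * B - T * (A + B) ^ 2 → 0 < A + B → σ A B T = 2)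
    (hσ3 : ∀ A B T : ℤ, 0 < A * B - T * (A + B) ^ 2 → A + B < 0 → σ A B T = -2)
    {A B T a b t : ℤ} (hsum : A + B = a + b)
    (hdisc : T * (A + B) ^ 2 - A * B = t * (a + b) ^ 2 - a * b) (h : t * (a + b) ^ 2 ≠ a * b) :
    σ A B T = σ a b t := by
  rcases (sub_ne_zero.mpr h.symm).lt_or_gt with hneg | hpos
  · rw [hσ1 a b t hneg, hσ1 A B T (by linarith)]
  · have hab : a + b ≠ 0 := by
      intro hab
      have : a * b - t * (a + b) ^ 2 = -a ^ 2 := by rw [show b = -a by omega]; ring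
      nlinarith [sq_nonneg a]
    rcases hab.lt_or_gt with hab | hab
    · rw [hσ3 a b t hpos hab, hσ3 A B T (by linarith) (hsum ▸ hab)]
    · rw [hσ2 a b t hpos hab, hσ2 A B T (by linarith) (hsum ▸ hab)]

noncomputable def sPoly (a b t lam : ℤ) (c : ℚ) : ℚ[X] :=
  let s : ℚ := a + b
  let d : ℚ := a - b
  let r : ℚ := (t * (a + b) ^ 2 - a * b : ℤ)
  C (s ^ 5 * lam ^ 4 / (56 * r)) * X ^ 4 + C (s ^ 3 * d * lam ^ 3 / (28 * r)) * X ^ 3 +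
    C ((s * (d ^ 2 + 2 * (1 - t) * s ^ 2) / (56 * r) + s ^ 2 * (4 * s ^ 2 + 8) / 672) * lam ^ 2) *
      X ^ 2 +
    C ((s * (1 - t) * d / (28 * r) + d * (4 * s ^ 2 + 8) / 672) * lam) * X +
    C (s * (1 - t) ^ 2 / (56 * r) + (-3 * a * b + (1 - t) * (8 + s ^ 2)) / 672 + c)

theorem eval_sPoly (a b t lam k : ℤ) (c : ℚ) :
    (sPoly a b t lam c).eval (k : ℚ) =
      sFormula (seqA a b lam k) (seqB a b lam k) (seqT a b t lam k) c := by
  rw [sFormula, seqT_mul_sub_seqA_mul_seqB, seqA_add_seqB]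
  simp only [sPoly, eval_add, eval_mul, eval_pow, eval_C, eval_X, seqA, seqB, seqT]
  generalize ((t * (a + b) ^ 2 - a * b : ℤ) : ℚ) = r
  push_cast
  ring

theorem coeff_sPoly_four (a b t lam : ℤ) (c : ℚ) :
    (sPoly a b t lam c).coeff 4 =
      ((a : ℚ) + b) ^ 5 * lam ^ 4 / (56 * ((t * (a + b) ^ 2 - a * b : ℤ) : ℚ)) := by
  simp only [sPoly, coeff_add, coeff_C_mul, coeff_X_pow, coeff_X, coeff_C]
  norm_num

theorem coeff_sPoly_one_of_add_eq_zero {a b : ℤ} (hab : a + b = 0) (t lam : ℤ) (c : ℚ) :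
    (sPoly a b t lam c).coeff 1 = ((a : ℚ) - b) * lam / 84 := by
  have hs : (a : ℚ) + b = 0 := by exact_mod_cast hab
  simp only [sPoly, coeff_add, coeff_C_mul, coeff_X_pow, coeff_X, coeff_C, hs]
  norm_num
  ring

theorem natDegree_sPoly_pos {a b t lam : ℤ} (h : t * (a + b) ^ 2 ≠ a * b) (hlam : lam ≠ 0)
    (c : ℚ) : 0 < (sPoly a b t lam c).natDegree := by
  have hlamQ : (lam : ℚ) ≠ 0 := by exact_mod_cast hlam
  by_cases hab : a + b = 0
  · have hd : (a : ℚ) - b ≠ 0 := by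
      have : a - b ≠ 0 := by
        intro hd
        obtain ⟨rfl, rfl⟩ : a = 0 ∧ b = 0 := by omega
        simp at h
      exact_mod_cast this
    have hcoeff : (sPoly a b t lam c).coeff 1 ≠ 0 := by
      rw [coeff_sPoly_one_of_add_eq_zero hab]
      exact div_ne_zero (mul_ne_zero hd hlamQ) (by norm_num)
    exact one_pos.trans_le (le_natDegree_of_ne_zero hcoeff)
  · have hr : ((t * (a + b) ^ 2 - a * b : ℤ) : ℚ) ≠ 0 := by exact_mod_cast sub_ne_zero.mpr h
    have hs : (a : ℚ) + b ≠ 0 := by exact_mod_cast hab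
    have hcoeff : (sPoly a b t lam c).coeff 4 ≠ 0 := by
      rw [coeff_sPoly_four]
      exact div_ne_zero (by positivity) (mul_ne_zero (by norm_num) hr)
    exact (by norm_num : 0 < 4).trans_le (le_natDegree_of_ne_zero hcoeff)

end KreckStolz

open KreckStolz in
/-- For `t(a+b)^2 ≠ ab`, with
`s(a,b,t) = (a+b)(1-t)^2/(2^3·7·(t(a+b)^2-ab)) + (-3ab+(1-t)(8+(a+b)^2))/(2^5·3·7) + σ/(2^5·7)`,
`r = t(a+b)^2 - ab`, `λ = 2^5·3·7·r`, and the sequence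
`a_k = a+(a+b)^2λk`, `b_k = b-(a+b)^2λk`, `t_k = t-(a-b)λk-(a+b)^2λ^2k^2`,
the values `s(a_k,b_k,t_k)` are infinitely many distinct rationals. -/
theorem stmt11 (a b t : ℤ) (h : t * (a + b) ^ 2 ≠ a * b)
    (σ : ℤ → ℤ → ℤ → ℚ)
    (hσ1 : ∀ A B T : ℤ, A * B - T * (A + B) ^ 2 < 0 → σ A B T = 0)
    (hσ2 : ∀ A B T : ℤ, 0 < A * B - T * (A + B) ^ 2 → 0 < A + B → σ A B T = 2)
    (hσ3 : ∀ A B T : ℤ, 0 < A * B - T * (A + B) ^ 2 → A + B < 0 → σ A B T = -2)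
    (sInv : ℤ → ℤ → ℤ → ℚ)
    (hs : ∀ A B T : ℤ, T * (A + B) ^ 2 ≠ A * B →
      sInv A B T =
        ((A + B : ℤ) : ℚ) * ((1 - (T : ℚ)) ^ 2) /
            ((2 ^ 3 * 7 : ℚ) * (((T * (A + B) ^ 2 - A * B : ℤ)) : ℚ)) +
          (-3 * (A : ℚ) * (B : ℚ) + (1 - (T : ℚ)) * (8 + ((A + B : ℤ) : ℚ) ^ 2)) /
            (2 ^ 5 * 3 * 7) +
          σ A B T / (2 ^ 5 * 7))
    (r lam : ℤ) (hr : r = t * (a + b) ^ 2 - a * b) (hlam : lam = 2 ^ 5 * 3 * 7 * r) :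
    (Set.range fun k : ℕ =>
      sInv (a + (a + b) ^ 2 * lam * k) (b - (a + b) ^ 2 * lam * k)
        (t - (a - b) * lam * k - (a + b) ^ 2 * lam ^ 2 * (k : ℤ) ^ 2)).Infinite := by
  have hr0 : r ≠ 0 := hr ▸ sub_ne_zero.mpr h
  have hlam0 : lam ≠ 0 := hlam ▸ mul_ne_zero (by norm_num) hr0
  have hval : ∀ k : ℕ,
      sInv (seqA a b lam k) (seqB a b lam k) (seqT a b t lam k) =
        (sPoly a b t lam (σ a b t / (2 ^ 5 * 7))).eval (k : ℚ) := by
    intro k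
    have hdisc := seqT_mul_sub_seqA_mul_seqB a b t lam k
    rw [hs _ _ _ (sub_ne_zero.mp (hdisc ▸ sub_ne_zero.mpr h)),
      sigma_eq_of_add_eq_of_disc_eq hσ1 hσ2 hσ3 (seqA_add_seqB a b lam k) hdisc h,
      ← Int.cast_natCast (R := ℚ) k, eval_sPoly, sFormula]
  simp only [seqA, seqB, seqT] at hval
  simp only [hval]
  exact infinite_range_eval_natCast (natDegree_sPoly_pos h hlam0 _)
end
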